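/- Let ρ ∈ (0,1), C* > 0, β* > 0, and nonnegative reals E_h, E_H, N_h, N_H, F_h, F_H. Assume: (i) for every ε > 0, E_h² ≤ (1+ε)N_h² + C*(1+1/ε)F_h², (ii) for every ε > 0, N_H² ≤ (1+ε)E_H² + C*(1+1/ε)F_H², and (iii) for every β ≥ β*, N_h² + β F_h² ≤ ρ (N_H² + β F_H²). Then there exist γ > 0 and ρ* ∈ (0,1) such that E_h² + γ F_h² ≤ ρ* (E_H² + γ F_H²). -/
import Mathlib


/-- Abstract contraction (Theorem 5.2, Becker–Mao–Shi marking). -/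
theorem contraction_BMS
    (ρ Cstar βstar Eh EH Nh NH Fh FH : ℝ)
    (hρ : 0 < ρ) (hρ1 : ρ < 1) (hCs : 0 < Cstar) (hβ : 0 < βstar)
    (hEh : 0 ≤ Eh) (hEH : 0 ≤ EH) (hNh : 0 ≤ Nh) (hNH : 0 ≤ NH)
    (hFh : 0 ≤ Fh) (hFH : 0 ≤ FH)
    (h1 : ∀ ε : ℝ, 0 < ε → Eh ^ 2 ≤ (1 + ε) * Nh ^ 2 + Cstar * (1 + 1 / ε) * Fh ^ 2)
    (h2 : ∀ ε : ℝ, 0 < ε → NH ^ 2 ≤ (1 + ε) * EH ^ 2 + Cstar * (1 + 1 / ε) * FH ^ 2)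
    (h3 : ∀ β : ℝ, βstar ≤ β → Nh ^ 2 + β * Fh ^ 2 ≤ ρ * (NH ^ 2 + β * FH ^ 2)) :
    ∃ γ ρstar : ℝ, 0 < γ ∧ 0 < ρstar ∧ ρstar < 1 ∧
      Eh ^ 2 + γ * Fh ^ 2 ≤ ρstar * (EH ^ 2 + γ * FH ^ 2) := by
  set ε : ℝ := (1 - ρ) / 4 with hεdef
  have hε : 0 < ε := by simp [hεdef]; linarith
  set A : ℝ := Cstar * (1 + 1 / ε) with hAdef
  have hA : 0 < A := by
    apply mul_pos hCs
    have : 0 < 1 / ε := by positivity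
    linarith
  set γ : ℝ := max (A / ε) ((1 + ε) * βstar) with hγdef
  have h1ε : 0 < 1 + ε := by linarith
  have hγ : 0 < γ := lt_of_lt_of_le (by positivity) (le_max_right _ _)
  set β : ℝ := (A + γ) / (1 + ε) with hβdef
  have hβγ : (1 + ε) * β = A + γ := by
    rw [hβdef]; field_simp
  have hγA : A / ε ≤ γ := le_max_left _ _
  have hγβ : (1 + ε) * βstar ≤ γ := le_max_right _ _
  have hεγA : A ≤ ε * γ := by
    have := (div_le_iff₀ hε).mp hγA; linarith
  have hββ : βstar ≤ β := by
    rw [hβdef, le_div_iff₀ h1ε]; nlinarith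
  have hAβ : A + β ≤ (1 + ε) * γ := by
    have h : (1 + ε) * (A + β) ≤ (1 + ε) * ((1 + ε) * γ) := by nlinarith
    exact le_of_mul_le_mul_left h h1ε
  refine ⟨γ, (1 + ε) ^ 2 * ρ, hγ, by positivity, ?_, ?_⟩
  · rw [hεdef]; nlinarith [sq_nonneg (1 - ρ), mul_pos hρ hρ, mul_pos (mul_pos hρ hρ) hρ]
  · have s1 := h1 ε hε
    have s2 := h2 ε hε
    have s3 := h3 β hββ
    have s1' : Eh ^ 2 ≤ (1 + ε) * Nh ^ 2 + A * Fh ^ 2 := by rw [hAdef]; exact s1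
    have key : (1 + ε) * (Nh ^ 2 + β * Fh ^ 2)
        = (1 + ε) * Nh ^ 2 + A * Fh ^ 2 + γ * Fh ^ 2 := by
      have : (1 + ε) * (Nh ^ 2 + β * Fh ^ 2)
          = (1 + ε) * Nh ^ 2 + ((1 + ε) * β) * Fh ^ 2 := by ring
      rw [this, hβγ]; ring
    have step1 : Eh ^ 2 + γ * Fh ^ 2 ≤ (1 + ε) * (Nh ^ 2 + β * Fh ^ 2) := by
      rw [key]; linarith
    have step2 : (1 + ε) * (Nh ^ 2 + β * Fh ^ 2) ≤ (1 + ε) * (ρ * (NH ^ 2 + β * FH ^ 2)) :=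
      mul_le_mul_of_nonneg_left s3 h1ε.le
    have s2' : NH ^ 2 ≤ (1 + ε) * EH ^ 2 + A * FH ^ 2 := by rw [hAdef]; exact s2
    have e0 : (A + β) * FH ^ 2 = A * FH ^ 2 + β * FH ^ 2 := by ring
    have step3 : NH ^ 2 + β * FH ^ 2 ≤ (1 + ε) * EH ^ 2 + (A + β) * FH ^ 2 := by
      rw [e0]; linarith
    have hmul : (A + β) * FH ^ 2 ≤ ((1 + ε) * γ) * FH ^ 2 :=
      mul_le_mul_of_nonneg_right hAβ (sq_nonneg FH)
    have h' : NH ^ 2 + β * FH ^ 2 ≤ (1 + ε) * EH ^ 2 + ((1 + ε) * γ) * FH ^ 2 := by linarith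
    have step4 := mul_le_mul_of_nonneg_left h' (mul_pos h1ε hρ).le
    have e1 : (1 + ε) * ρ * (NH ^ 2 + β * FH ^ 2) = (1 + ε) * (ρ * (NH ^ 2 + β * FH ^ 2)) := by
      ring
    have e2 : (1 + ε) * ρ * ((1 + ε) * EH ^ 2 + ((1 + ε) * γ) * FH ^ 2) =
        (1 + ε) ^ 2 * ρ * (EH ^ 2 + γ * FH ^ 2) := by ring
    rw [e1, e2] at step4
    linarith
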